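/- arXiv:1907.01494 — 4 statements merged into one kernel-verified Lean document; each statement's English description precedes it below -/
import Mathlib

section
/- Let (A,B) be a pair of nonempty convex subsets of a strictly convex normed linear space X. Then for every x ∈ A₀ there exists exactly one point y ∈ B₀ with ‖x−y‖ = dist(A,B), and for every y ∈ B₀ there exists exactly one point x ∈ A₀ with ‖x−y‖ = dist(A,B). (Thus the proximity projection P : A₀ ∪ B₀ → A₀ ∪ B₀, sending each point to its unique proximal point in the opposite set, is well defined.) -/
/-!
Two distinct points realizing the distance from a fixed point `x` to a convex set would have their
midpoint in the set as well, and by strict convexity that midpoint is strictly closer to `x`.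
-/

open Set

/-- `setDist A B = inf {‖x - y‖ : x ∈ A, y ∈ B}`. -/
noncomputable def setDist {X : Type*} [NormedAddCommGroup X] (A B : Set X) : ℝ :=
  sInf ((fun p : X × X => ‖p.1 - p.2‖) '' (A ×ˢ B))

/-- `A₀ = {x ∈ A : ‖x - y‖ = dist(A,B) for some y ∈ B}`. -/
noncomputable def proxA {X : Type*} [NormedAddCommGroup X] (A B : Set X) : Set X :=
  {x ∈ A | ∃ y ∈ B, ‖x - y‖ = setDist A B}

/-- `B₀ = {y ∈ B : ‖x - y‖ = dist(A,B) for some x ∈ A}`. -/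
noncomputable def proxB {X : Type*} [NormedAddCommGroup X] (A B : Set X) : Set X :=
  {y ∈ B | ∃ x ∈ A, ‖x - y‖ = setDist A B}

theorem Convex.eq_of_dist_eq_of_forall_le {X : Type*} [NormedAddCommGroup X] [NormedSpace ℝ X]
    [StrictConvexSpace ℝ X] {C : Set X} (hC : Convex ℝ C) {x y₁ y₂ : X} {d : ℝ}
    (hd : ∀ z ∈ C, d ≤ dist z x) (hy₁ : y₁ ∈ C) (hy₂ : y₂ ∈ C)
    (h₁ : dist y₁ x = d) (h₂ : dist y₂ x = d) : y₁ = y₂ := by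
  by_contra hne
  have hmid : (1 / 2 : ℝ) • y₁ + (1 / 2 : ℝ) • y₂ ∈ Metric.ball x d :=
    combo_mem_ball_of_ne h₁.le h₂.le hne (by norm_num) (by norm_num) (by norm_num)
  exact (hd _ (hC hy₁ hy₂ (by norm_num) (by norm_num) (by norm_num))).not_gt hmid

section setDist

variable {X : Type*} [NormedAddCommGroup X] {A B : Set X}

theorem setDist_le_norm_sub {x y : X} (hx : x ∈ A) (hy : y ∈ B) : setDist A B ≤ ‖x - y‖ :=
  csInf_le ⟨0, by rintro _ ⟨p, -, rfl⟩; exact norm_nonneg _⟩ ⟨(x, y), ⟨hx, hy⟩, rfl⟩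

variable [NormedSpace ℝ X] [StrictConvexSpace ℝ X]

theorem eq_of_norm_sub_eq_setDist_right (hB : Convex ℝ B) {x y₁ y₂ : X} (hx : x ∈ A)
    (hy₁ : y₁ ∈ B) (hy₂ : y₂ ∈ B) (h₁ : ‖x - y₁‖ = setDist A B) (h₂ : ‖x - y₂‖ = setDist A B) :
    y₁ = y₂ :=
  hB.eq_of_dist_eq_of_forall_le (x := x)
    (fun z hz => (dist_eq_norm' z x).symm ▸ setDist_le_norm_sub hx hz) hy₁ hy₂
    ((dist_eq_norm' y₁ x).trans h₁) ((dist_eq_norm' y₂ x).trans h₂)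

theorem eq_of_norm_sub_eq_setDist_left (hA : Convex ℝ A) {x₁ x₂ y : X} (hx₁ : x₁ ∈ A)
    (hx₂ : x₂ ∈ A) (hy : y ∈ B) (h₁ : ‖x₁ - y‖ = setDist A B) (h₂ : ‖x₂ - y‖ = setDist A B) :
    x₁ = x₂ :=
  hA.eq_of_dist_eq_of_forall_le (x := y)
    (fun z hz => (dist_eq_norm z y).symm ▸ setDist_le_norm_sub hz hy) hx₁ hx₂
    ((dist_eq_norm x₁ y).trans h₁) ((dist_eq_norm x₂ y).trans h₂)

end setDist

theorem proximity_projection_wellDefined_general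
    {X : Type*} [NormedAddCommGroup X] [NormedSpace ℝ X] [StrictConvexSpace ℝ X]
    (A B : Set X)
    (hAconv : Convex ℝ A) (hBconv : Convex ℝ B) :
    (∀ x ∈ proxA A B, ∃! y, y ∈ proxB A B ∧ ‖x - y‖ = setDist A B) ∧
      (∀ y ∈ proxB A B, ∃! x, x ∈ proxA A B ∧ ‖x - y‖ = setDist A B) := by
  constructor
  · rintro x ⟨hxA, y, hyB, hxy⟩
    refine ⟨y, ⟨⟨hyB, x, hxA, hxy⟩, hxy⟩, ?_⟩
    rintro y' ⟨⟨hy'B, -⟩, hxy'⟩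
    exact eq_of_norm_sub_eq_setDist_right hBconv hxA hy'B hyB hxy' hxy
  · rintro y ⟨hyB, x, hxA, hxy⟩
    refine ⟨x, ⟨⟨hxA, y, hyB, hxy⟩, hxy⟩, ?_⟩
    rintro x' ⟨⟨hx'A, -⟩, hx'y⟩
    exact eq_of_norm_sub_eq_setDist_left hAconv hx'A hxA hyB hx'y hxy

/-- In a strictly convex space, for a pair of nonempty convex sets, every point of `A₀` has a
unique proximal point in `B₀` and vice versa; hence the proximity projection is well defined. -/
theorem proximity_projection_wellDefined
    {X : Type*} [NormedAddCommGroup X] [NormedSpace ℝ X] [StrictConvexSpace ℝ X]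
    (A B : Set X) (hA : A.Nonempty) (hB : B.Nonempty)
    (hAconv : Convex ℝ A) (hBconv : Convex ℝ B) :
    (∀ x ∈ proxA A B, ∃! y, y ∈ proxB A B ∧ ‖x - y‖ = setDist A B) ∧
      (∀ y ∈ proxB A B, ∃! x, x ∈ proxA A B ∧ ‖x - y‖ = setDist A B) :=
  proximity_projection_wellDefined_general A B hAconv hBconv
end

section
/- Let (A,B) be a nonempty, bounded, closed and convex pair in a reflexive and strictly convex Banach space X, let T : A ∪ B → A ∪ B be a noncyclic relatively nonexpansive mapping, and suppose x* ∈ A₀ satisfies ‖x* − T(Px*)‖ = dist(A,B). Then Tx* = x*, P x* = T(Px*), and (x*, Px*) is a best proximity pair of T. -/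
open Set

/-! Strict convexity makes proximal points unique: `u` and `T u` are both nearest to `x` in `B`,
so `u = T u`; then `‖T x - u‖ = ‖T x - T u‖ ≤ ‖x - u‖` makes `T x` and `x` both nearest to `u`
in `A`, so `T x = x`. -/

section

variable {X : Type*} [NormedAddCommGroup X]

lemma setDist_le_norm_sub_s9 {A B : Set X} {a b : X} (ha : a ∈ A) (hb : b ∈ B) :
    setDist A B ≤ ‖a - b‖ :=
  csInf_le ⟨0, by rintro r ⟨p, _, rfl⟩; positivity⟩ ⟨(a, b), ⟨ha, hb⟩, rfl⟩

section StrictConvex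

variable [NormedSpace ℝ X] [StrictConvexSpace ℝ X]

theorem Convex.eq_of_norm_sub_eq_of_forall_le {C : Set X} (hC : Convex ℝ C) {a p q : X}
    (hp : p ∈ C) (hq : q ∈ C) (hpq : ‖a - p‖ = ‖a - q‖)
    (hmin : ∀ c ∈ C, ‖a - p‖ ≤ ‖a - c‖) : p = q := by
  by_contra hne
  have hmid : (1 / 2 : ℝ) • (p + q) ∈ C := by
    simpa only [smul_add] using hC hp hq (by norm_num) (by norm_num) (add_halves 1)
  have hlt : ‖(1 / 2 : ℝ) • ((a - p) + (a - q))‖ < ‖a - p‖ :=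
    (norm_midpoint_lt_iff hpq).2 fun h => hne (sub_right_injective h)
  have hsub : a - (1 / 2 : ℝ) • (p + q) = (1 / 2 : ℝ) • ((a - p) + (a - q)) := by module
  have := hmin _ hmid
  rw [hsub] at this
  linarith

lemma eq_of_norm_sub_eq_setDist_right_s9 {A B : Set X} (hB : Convex ℝ B) {a p q : X}
    (ha : a ∈ A) (hp : p ∈ B) (hq : q ∈ B)
    (hap : ‖a - p‖ = setDist A B) (haq : ‖a - q‖ = setDist A B) : p = q :=
  hB.eq_of_norm_sub_eq_of_forall_le hp hq (hap.trans haq.symm) fun _ hc =>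
    hap ▸ setDist_le_norm_sub_s9 ha hc

lemma eq_of_norm_sub_eq_setDist_left_s9 {A B : Set X} (hA : Convex ℝ A) {b p q : X}
    (hb : b ∈ B) (hp : p ∈ A) (hq : q ∈ A)
    (hpb : ‖p - b‖ = setDist A B) (hqb : ‖q - b‖ = setDist A B) : p = q := by
  refine hA.eq_of_norm_sub_eq_of_forall_le hp hq (by rw [norm_sub_rev, hpb, norm_sub_rev, hqb])
    fun c hc => ?_
  rw [norm_sub_rev, hpb, norm_sub_rev]
  exact setDist_le_norm_sub_s9 hc hb

end StrictConvex

end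

theorem best_proximity_pair_of_cyclic_bpp_general
    {X : Type*} [NormedAddCommGroup X] [NormedSpace ℝ X]
    [StrictConvexSpace ℝ X]
    (A B : Set X)
    (hAconv : Convex ℝ A) (hBconv : Convex ℝ B)
    (T : X → X) (hTA : MapsTo T A A) (hTB : MapsTo T B B)
    (hT : ∀ x ∈ A, ∀ y ∈ B, ‖T x - T y‖ ≤ ‖x - y‖)
    (x u : X) (hx : x ∈ proxA A B) (hu : u ∈ proxB A B)
    (hxu : ‖x - u‖ = setDist A B) (hbpp : ‖x - T u‖ = setDist A B) :
    T x = x ∧ u = T u ∧ ‖x - u‖ = setDist A B := by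
  obtain ⟨hxA, -⟩ := hx
  obtain ⟨huB, -⟩ := hu
  have huTu : u = T u := eq_of_norm_sub_eq_setDist_right_s9 hBconv hxA huB (hTB huB) hxu hbpp
  have hTxu : ‖T x - u‖ = setDist A B := by
    refine le_antisymm ?_ (setDist_le_norm_sub_s9 (hTA hxA) huB)
    calc ‖T x - u‖ = ‖T x - T u‖ := by rw [← huTu]
      _ ≤ ‖x - u‖ := hT x hxA u huB
      _ = setDist A B := hxu
  have hxTx : x = T x := eq_of_norm_sub_eq_setDist_left_s9 hAconv huB hxA (hTA hxA) hxu hTxu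
  exact ⟨hxTx.symm, huTu, hxu⟩

/-- If `T` is noncyclic relatively nonexpansive and `x* ∈ A₀` satisfies
`‖x* - T(Px*)‖ = dist(A,B)`, then `T x* = x*`, `P x* = T (P x*)`, and `(x*, Px*)` is a best
proximity pair of `T`.  Here `u` denotes `P x*`, the unique proximal point of `x*` in `B₀`. -/
theorem best_proximity_pair_of_cyclic_bpp
    {X : Type*} [NormedAddCommGroup X] [NormedSpace ℝ X] [CompleteSpace X]
    [StrictConvexSpace ℝ X]
    (hrefl : Function.Surjective (NormedSpace.inclusionInDoubleDual ℝ X))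
    (A B : Set X) (hA : A.Nonempty) (hB : B.Nonempty)
    (hAbd : Bornology.IsBounded A) (hBbd : Bornology.IsBounded B)
    (hAcl : IsClosed A) (hBcl : IsClosed B)
    (hAconv : Convex ℝ A) (hBconv : Convex ℝ B)
    (T : X → X) (hTA : MapsTo T A A) (hTB : MapsTo T B B)
    (hT : ∀ x ∈ A, ∀ y ∈ B, ‖T x - T y‖ ≤ ‖x - y‖)
    (x u : X) (hx : x ∈ proxA A B) (hu : u ∈ proxB A B)
    (hxu : ‖x - u‖ = setDist A B) (hbpp : ‖x - T u‖ = setDist A B) :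
    T x = x ∧ u = T u ∧ ‖x - u‖ = setDist A B :=
  best_proximity_pair_of_cyclic_bpp_general A B hAconv hBconv T hTA hTB hT x u hx hu hxu hbpp
end

section
/- Let (A,B) be a nonempty, closed and convex pair in a uniformly convex Banach space X and let T : A ∪ B → A ∪ B be a cyclic contraction. For x₀ ∈ A define x_{n+1} := T x_n for each n ≥ 0. Then there exists a unique x* ∈ A such that x_{2n} → x* and ‖x* − T x*‖ = dist(A,B). -/
open Set Filter Topology

/-- Quantitative convexity lemma: if `C` is convex, `d ≤ ‖z - b‖` for all `z ∈ C`, and two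
points of `C` are within `d + η` of `b`, then they are `ε`-close, for suitable `η`. -/
lemma quant_uc {X : Type*} [NormedAddCommGroup X] [NormedSpace ℝ X] [UniformConvexSpace X]
    {C : Set X} (hC : Convex ℝ C) {d : ℝ} (hd : 0 ≤ d) {ε : ℝ} (hε : 0 < ε) :
    ∃ η > 0, ∀ a₁ ∈ C, ∀ a₂ ∈ C, ∀ b : X, (∀ z ∈ C, d ≤ ‖z - b‖) →
      ‖a₁ - b‖ ≤ d + η → ‖a₂ - b‖ ≤ d + η → ‖a₁ - a₂‖ ≤ ε := by
  rcases hd.eq_or_lt with hd0 | hdpos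
  · refine ⟨ε / 2, by positivity, fun a₁ _ a₂ _ b _ h₁ h₂ => ?_⟩
    have ht := norm_sub_le_norm_sub_add_norm_sub a₁ b a₂
    rw [norm_sub_rev b a₂] at ht
    rw [← hd0] at h₁ h₂
    linarith
  · obtain ⟨δ, hδ, hball⟩ := exists_forall_closed_ball_dist_add_le_two_sub X
      (div_pos hε (by linarith : (0:ℝ) < 2 * d))
    refine ⟨min d (δ * d / 2), lt_min hdpos (by positivity),
      fun a₁ ha₁ a₂ ha₂ b hlow h₁ h₂ => ?_⟩
    set η := min d (δ * d / 2) with hηdef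
    have hηd : η ≤ d := min_le_left _ _
    have hηδ : η ≤ δ * d / 2 := min_le_right _ _
    have hηpos : 0 < η := lt_min hdpos (by positivity)
    by_contra hcon
    push_neg at hcon
    have hR : 0 < d + η := by linarith
    set u := (d + η)⁻¹ • (a₁ - b) with hu_def
    set v := (d + η)⁻¹ • (a₂ - b) with hv_def
    have hnorm_smul : ∀ w : X, ‖(d + η)⁻¹ • w‖ = ‖w‖ / (d + η) := fun w => by
      rw [norm_smul, Real.norm_eq_abs, abs_of_pos (inv_pos.2 hR), inv_mul_eq_div]
    have hu : ‖u‖ ≤ 1 := by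
      rw [hu_def, hnorm_smul]; exact (div_le_one hR).2 h₁
    have hv : ‖v‖ ≤ 1 := by
      rw [hv_def, hnorm_smul]; exact (div_le_one hR).2 h₂
    have huv : ε / (2 * d) ≤ ‖u - v‖ := by
      have heq : u - v = (d + η)⁻¹ • (a₁ - a₂) := by
        rw [hu_def, hv_def, ← smul_sub]; congr 1; abel
      rw [heq, hnorm_smul]
      rw [div_le_div_iff₀ (by linarith) hR]
      nlinarith [hcon, hR, hε]
    have key : ‖u + v‖ ≤ 2 - δ := hball hu hv huv
    have h2 : ‖(a₁ - b) + (a₂ - b)‖ ≤ (2 - δ) * (d + η) := by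
      have heq : u + v = (d + η)⁻¹ • ((a₁ - b) + (a₂ - b)) := by
        rw [hu_def, hv_def, smul_add]
      rw [heq, hnorm_smul, div_le_iff₀ hR] at key
      exact key
    have hmid : (1/2 : ℝ) • a₁ + (1/2 : ℝ) • a₂ ∈ C :=
      hC ha₁ ha₂ (by norm_num) (by norm_num) (by norm_num)
    have hlow2 : d ≤ ‖(1/2 : ℝ) • a₁ + (1/2 : ℝ) • a₂ - b‖ := hlow _ hmid
    have h3 : (1/2 : ℝ) • a₁ + (1/2 : ℝ) • a₂ - b
        = (1/2 : ℝ) • ((a₁ - b) + (a₂ - b)) := by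
      module
    have h4 : d ≤ (1/2 : ℝ) * ((2 - δ) * (d + η)) := by
      calc d ≤ ‖(1/2 : ℝ) • ((a₁ - b) + (a₂ - b))‖ := h3 ▸ hlow2
        _ = (1/2 : ℝ) * ‖(a₁ - b) + (a₂ - b)‖ := by
            rw [norm_smul, Real.norm_eq_abs]; norm_num
        _ ≤ (1/2 : ℝ) * ((2 - δ) * (d + η)) := by linarith
    nlinarith [mul_pos hδ hηpos, hδ, hηpos, hdpos]

/-- Eldred–Veeramani: in a uniformly convex Banach space, for a nonempty closed convex pair
`(A, B)` and a cyclic contraction `T`, the even Picard iterates starting at any `x₀ ∈ A`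
converge to the unique best proximity point `x* ∈ A` of `T` obtained this way. -/
theorem cyclic_contraction_best_proximity_point
    {X : Type*} [NormedAddCommGroup X] [NormedSpace ℝ X] [CompleteSpace X]
    [UniformConvexSpace X]
    (A B : Set X) (hA : A.Nonempty) (hB : B.Nonempty)
    (hAcl : IsClosed A) (hBcl : IsClosed B)
    (hAconv : Convex ℝ A) (hBconv : Convex ℝ B)
    (T : X → X) (hTA : Set.MapsTo T A B) (hTB : Set.MapsTo T B A)
    (α : ℝ) (hα : α ∈ Set.Ioo (0 : ℝ) 1)
    (hT : ∀ x ∈ A, ∀ y ∈ B, ‖T x - T y‖ ≤ α * ‖x - y‖ + (1 - α) * setDist A B)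
    (x₀ : X) (hx₀ : x₀ ∈ A) (x : ℕ → X) (hx0 : x 0 = x₀) (hxs : ∀ n, x (n + 1) = T (x n)) :
    ∃! p : X, p ∈ A ∧ Tendsto (fun n => x (2 * n)) atTop (nhds p) ∧
      ‖p - T p‖ = setDist A B := by
  obtain ⟨hα0, hα1⟩ := hα
  set d := setDist A B with hd_def
  -- basic facts about d
  have hd0 : 0 ≤ d := by
    apply Real.sInf_nonneg
    rintro r ⟨⟨a, b⟩, -, rfl⟩
    exact norm_nonneg _
  have hdle : ∀ a ∈ A, ∀ b ∈ B, d ≤ ‖a - b‖ := by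
    intro a ha b hb
    apply csInf_le
    · exact ⟨0, by rintro r ⟨⟨a', b'⟩, -, rfl⟩; exact norm_nonneg _⟩
    · exact ⟨(a, b), ⟨ha, hb⟩, rfl⟩
  -- parity membership
  have hmem : ∀ n, (Even n → x n ∈ A) ∧ (Odd n → x n ∈ B) := by
    intro n
    induction n with
    | zero =>
      refine ⟨fun _ => hx0 ▸ hx₀, fun h => absurd h (by simp)⟩
    | succ k ih =>
      constructor
      · intro h
        rw [hxs]
        obtain ⟨m, hm⟩ := h
        exact hTB (ih.2 ⟨m - 1, by omega⟩)
      · intro h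
        rw [hxs]
        obtain ⟨m, hm⟩ := h
        exact hTA (ih.1 ⟨m, by omega⟩)
  have hmA : ∀ k, x (2 * k) ∈ A := fun k => (hmem _).1 ⟨k, by ring⟩
  have hmB : ∀ k, x (2 * k + 1) ∈ B := fun k => (hmem _).2 ⟨k, by ring⟩
  clear_value d
  -- the gap sequence
  set c : ℕ → ℝ := fun n => ‖x n - x (n + 1)‖ - d with hc_def
  clear_value c
  have hc' : ∀ n, c n = ‖x n - x (n + 1)‖ - d := fun n => by rw [hc_def]
  have hcd : ∀ n m, m = n + 1 → ‖x n - x m‖ = c n + d := by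
    intro n m h; subst h; rw [hc']; ring
  have hlow : ∀ n, d ≤ ‖x n - x (n + 1)‖ := by
    intro n
    rcases Nat.even_or_odd n with ⟨k, hk⟩ | ⟨k, hk⟩
    · have h1 : x n ∈ A := (hmem n).1 ⟨k, hk⟩
      have h2 : x (n + 1) ∈ B := (hmem (n + 1)).2 ⟨k, by omega⟩
      exact hdle _ h1 _ h2
    · have h1 : x n ∈ B := (hmem n).2 ⟨k, hk⟩
      have h2 : x (n + 1) ∈ A := (hmem (n + 1)).1 ⟨k + 1, by omega⟩
      rw [norm_sub_rev]
      exact hdle _ h2 _ h1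
  have hc0 : ∀ n, 0 ≤ c n := fun n => by rw [hc']; exact sub_nonneg.2 (hlow n)
  have hstep : ∀ n, c (n + 1) ≤ α * c n := by
    intro n
    have key : ‖x (n + 1) - x (n + 2)‖ ≤ α * ‖x n - x (n + 1)‖ + (1 - α) * d := by
      have e1 : x (n + 1) = T (x n) := hxs n
      have e2 : x (n + 2) = T (x (n + 1)) := hxs (n + 1)
      rcases Nat.even_or_odd n with ⟨k, hk⟩ | ⟨k, hk⟩
      · have h1 : x n ∈ A := (hmem n).1 ⟨k, hk⟩
        have h2 : x (n + 1) ∈ B := (hmem (n + 1)).2 ⟨k, by omega⟩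
        have h := hT _ h1 _ h2
        rwa [← e1, ← e2] at h
      · have h1 : x n ∈ B := (hmem n).2 ⟨k, hk⟩
        have h2 : x (n + 1) ∈ A := (hmem (n + 1)).1 ⟨k + 1, by omega⟩
        have h := hT _ h2 _ h1
        rw [← e1, ← e2] at h
        rwa [norm_sub_rev (x (n + 1)) (x n), norm_sub_rev (x (n + 2))] at h
    rw [hc' (n + 1), hc' n, show n + 1 + 1 = n + 2 from rfl]
    linarith
  have hcgeom : ∀ n, c n ≤ α ^ n * c 0 := by
    intro n
    induction n with
    | zero => simp
    | succ k ih =>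
      calc c (k + 1) ≤ α * c k := hstep k
        _ ≤ α * (α ^ k * c 0) := by
            exact mul_le_mul_of_nonneg_left ih hα0.le
        _ = α ^ (k + 1) * c 0 := by ring
  have hctend : Tendsto c atTop (𝓝 0) := by
    apply squeeze_zero hc0 hcgeom
    have := (tendsto_pow_atTop_nhds_zero_of_lt_one hα0.le hα1).mul_const (c 0)
    simpa using this
  have hcsmall : ∀ θ > (0:ℝ), ∃ N, ∀ j ≥ N, c j ≤ θ := by
    intro θ hθ
    obtain ⟨N, hN⟩ := (Metric.tendsto_atTop.1 hctend) θ hθ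
    refine ⟨N, fun j hj => ?_⟩
    have := hN j hj
    rw [Real.dist_eq, sub_zero, abs_of_nonneg (hc0 j)] at this
    exact this.le
  -- gap between consecutive odd iterates tends to 0
  have hg : ∀ θ > (0:ℝ), ∃ K, ∀ k ≥ K, ‖x (2 * k + 1) - x (2 * k + 3)‖ ≤ θ := by
    intro θ hθ
    obtain ⟨η, hη, hq⟩ := quant_uc hBconv hd0 hθ
    obtain ⟨N, hN⟩ := hcsmall η hη
    refine ⟨N, fun k hk => ?_⟩
    have mb1 : x (2 * k + 1) ∈ B := hmB k
    have mb2 : x (2 * k + 3) ∈ B := by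
      have := hmB (k + 1)
      rwa [show 2 * (k + 1) + 1 = 2 * k + 3 from by ring] at this
    have ma : x (2 * k + 2) ∈ A := by
      have := hmA (k + 1)
      rwa [show 2 * (k + 1) = 2 * k + 2 from by ring] at this
    refine hq _ mb1 _ mb2 (x (2 * k + 2))
      (fun z hz => by rw [norm_sub_rev]; exact hdle _ ma _ hz) ?_ ?_
    · have h1 : c (2 * k + 1) ≤ η := hN _ (by omega)
      have h2 : ‖x (2 * k + 1) - x (2 * k + 2)‖ = c (2 * k + 1) + d :=
        hcd _ _ (by omega)
      rw [h2]; linarith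
    · have h1 : c (2 * k + 2) ≤ η := hN _ (by omega)
      have h2 : ‖x (2 * k + 2) - x (2 * k + 3)‖ = c (2 * k + 2) + d :=
        hcd _ _ (by omega)
      rw [norm_sub_rev, h2]; linarith
  -- key recursion: bound on ‖x (2m) - x (2k+3)‖ for m ≥ k+2
  have hα2 : (0:ℝ) < 1 - α ^ 2 := by nlinarith
  obtain ⟨β, hβnn, hβ⟩ : ∃ β : ℝ, 0 ≤ β ∧ α ^ 2 * β + α ^ 2 = β :=
    ⟨α ^ 2 / (1 - α ^ 2), by positivity, by field_simp; ring⟩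
  have claim : ∀ k j, ‖x (2 * k + 2 * j + 4) - x (2 * k + 3)‖
      ≤ d + c (2 * k + 3) + β * ‖x (2 * k + 1) - x (2 * k + 3)‖ := by
    intro k j
    set G := ‖x (2 * k + 1) - x (2 * k + 3)‖ with hG_def
    have hGnn : 0 ≤ G := norm_nonneg _
    induction j with
    | zero =>
      have h2 : ‖x (2 * k + 3) - x (2 * k + 4)‖ = c (2 * k + 3) + d :=
        hcd _ _ (by omega)
      rw [show 2 * k + 2 * 0 + 4 = 2 * k + 4 from by ring, norm_sub_rev, h2]
      nlinarith [mul_nonneg hβnn hGnn]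
    | succ j ih =>
      have m1 : x (2 * k + 2) ∈ A := by
        have := hmA (k + 1); rwa [show 2 * (k + 1) = 2 * k + 2 from by ring] at this
      have m2 : x (2 * k + 2 * j + 5) ∈ B := by
        have := hmB (k + j + 2)
        rwa [show 2 * (k + j + 2) + 1 = 2 * k + 2 * j + 5 from by ring] at this
      have m3 : x (2 * k + 2 * j + 4) ∈ A := by
        have := hmA (k + j + 2)
        rwa [show 2 * (k + j + 2) = 2 * k + 2 * j + 4 from by ring] at this
      have m4 : x (2 * k + 1) ∈ B := hmB k
      have e1 : ‖x (2 * k + 3) - x (2 * k + 2 * j + 6)‖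
          ≤ α * ‖x (2 * k + 2) - x (2 * k + 2 * j + 5)‖ + (1 - α) * d := by
        have h := hT _ m1 _ m2
        rw [← hxs, ← hxs] at h
        rwa [show 2 * k + 2 + 1 = 2 * k + 3 from by ring,
          show 2 * k + 2 * j + 5 + 1 = 2 * k + 2 * j + 6 from by ring] at h
      have e2 : ‖x (2 * k + 2 * j + 5) - x (2 * k + 2)‖
          ≤ α * ‖x (2 * k + 2 * j + 4) - x (2 * k + 1)‖ + (1 - α) * d := by
        have h := hT _ m3 _ m4
        rw [← hxs, ← hxs] at h
        rwa [show 2 * k + 2 * j + 4 + 1 = 2 * k + 2 * j + 5 from by ring,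
          show 2 * k + 1 + 1 = 2 * k + 2 from by ring] at h
      have e3 : ‖x (2 * k + 2 * j + 4) - x (2 * k + 1)‖
          ≤ ‖x (2 * k + 2 * j + 4) - x (2 * k + 3)‖ + G := by
        have h := norm_sub_le_norm_sub_add_norm_sub
          (x (2 * k + 2 * j + 4)) (x (2 * k + 3)) (x (2 * k + 1))
        rwa [norm_sub_rev (x (2 * k + 3))] at h
      have s1 : ‖x (2 * k + 2 * j + 4) - x (2 * k + 1)‖
          ≤ d + c (2 * k + 3) + β * G + G := by linarith
      have s2 : ‖x (2 * k + 2 * j + 5) - x (2 * k + 2)‖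
          ≤ α * (d + c (2 * k + 3) + β * G + G) + (1 - α) * d := by
        have := mul_le_mul_of_nonneg_left s1 hα0.le
        linarith
      have s3 : ‖x (2 * k + 2 * (j + 1) + 4) - x (2 * k + 3)‖
          ≤ α * (α * (d + c (2 * k + 3) + β * G + G) + (1 - α) * d) + (1 - α) * d := by
        rw [show 2 * k + 2 * (j + 1) + 4 = 2 * k + 2 * j + 6 from by ring, norm_sub_rev]
        have h2 := mul_le_mul_of_nonneg_left s2 hα0.le
        rw [norm_sub_rev (x (2 * k + 2)) (x (2 * k + 2 * j + 5))] at e1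
        linarith
      have final : α * (α * (d + c (2 * k + 3) + β * G + G) + (1 - α) * d) + (1 - α) * d
          ≤ d + c (2 * k + 3) + β * G := by
        have h1 : (1 - α ^ 2) * c (2 * k + 3) ≥ 0 := mul_nonneg hα2.le (hc0 _)
        nlinarith [hβ, hGnn, hc0 (2 * k + 3)]
      linarith
  -- Cauchy
  have hcauchy : CauchySeq (fun n => x (2 * n)) := by
    rw [Metric.cauchySeq_iff']
    intro ε hε
    obtain ⟨η, hη, hq⟩ := quant_uc hAconv hd0 (half_pos hε)
    obtain ⟨K1, hK1⟩ := hcsmall (η / 2) (by positivity)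
    have hβ1 : (0:ℝ) < 2 * (β + 1) := by linarith
    obtain ⟨K2, hK2⟩ := hg (η / (2 * (β + 1))) (div_pos hη hβ1)
    obtain ⟨k, hkK1, hkK2⟩ : ∃ k, K1 ≤ k ∧ K2 ≤ k :=
      ⟨max K1 K2, le_max_left _ _, le_max_right _ _⟩
    refine ⟨k + 2, fun n hn => ?_⟩
    have hGb : β * ‖x (2 * k + 1) - x (2 * k + 3)‖ ≤ η / 2 := by
      have h1 := hK2 k hkK2
      have h2 : β * ‖x (2 * k + 1) - x (2 * k + 3)‖ ≤ β * (η / (2 * (β + 1))) :=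
        mul_le_mul_of_nonneg_left h1 hβnn
      have h3 : β * (η / (2 * (β + 1))) ≤ η / 2 := by
        rw [← mul_div_assoc, div_le_div_iff₀ hβ1 (by norm_num : (0:ℝ) < 2)]
        nlinarith
      linarith
    have hcb : c (2 * k + 3) ≤ η / 2 := hK1 _ (by omega)
    have hbound : ∀ m, m ≥ k + 2 → ‖x (2 * m) - x (2 * k + 3)‖ ≤ d + η := by
      intro m hm
      have := claim k (m - (k + 2))
      rw [show 2 * k + 2 * (m - (k + 2)) + 4 = 2 * m from by omega] at this
      have h4 : d + c (2 * k + 3) + β * ‖x (2 * k + 1) - x (2 * k + 3)‖ ≤ d + η := by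
        linarith
      exact this.trans h4
    have mb : x (2 * k + 3) ∈ B := by
      have := hmB (k + 1)
      rwa [show 2 * (k + 1) + 1 = 2 * k + 3 from by ring] at this
    have key := hq _ (hmA n) _ (hmA (k + 2)) (x (2 * k + 3))
      (fun z hz => hdle _ hz _ mb) (hbound n hn) (hbound (k + 2) le_rfl)
    rw [dist_eq_norm]
    calc ‖x (2 * n) - x (2 * (k + 2))‖ ≤ ε / 2 := key
      _ < ε := half_lt_self hε
  obtain ⟨p, hp⟩ := cauchySeq_tendsto_of_complete hcauchy
  have hpA : p ∈ A := hAcl.mem_of_tendsto hp (Eventually.of_forall fun n => hmA n)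
  have hge : d ≤ ‖p - T p‖ := hdle _ hpA _ (hTA hpA)
  have hle : ‖p - T p‖ ≤ d := by
    by_contra hcon
    push_neg at hcon
    obtain ⟨ε, hε, hεkey⟩ : ∃ ε : ℝ, 0 < ε ∧ d + 3 * ε ≤ ‖p - T p‖ :=
      ⟨(‖p - T p‖ - d) / 3, by linarith, by linarith⟩
    obtain ⟨M1, hM1⟩ := (Metric.tendsto_atTop.1 hp) ε hε
    obtain ⟨M2, hM2⟩ := hcsmall ε hε
    obtain ⟨n, hnM1, hnM2⟩ : ∃ n, M1 ≤ n ∧ M2 ≤ n :=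
      ⟨max M1 M2, le_max_left _ _, le_max_right _ _⟩
    have d1 : ‖x (2 * n) - p‖ < ε := by
      have := hM1 n hnM1; rwa [dist_eq_norm] at this
    have d2 : ‖x (2 * n + 2) - p‖ < ε := by
      have := hM1 (n + 1) (by omega)
      rw [dist_eq_norm, show 2 * (n + 1) = 2 * n + 2 from by ring] at this
      exact this
    have d3 : ‖x (2 * n) - x (2 * n + 1)‖ ≤ d + ε := by
      have h1 : c (2 * n) ≤ ε := hM2 _ (by omega)
      have h2 : ‖x (2 * n) - x (2 * n + 1)‖ = c (2 * n) + d := hcd _ _ (by omega)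
      rw [h2]; linarith
    have t2 : ‖x (2 * n + 2) - T p‖ ≤ α * ‖p - x (2 * n + 1)‖ + (1 - α) * d := by
      have h := hT p hpA _ (hmB n)
      rw [← hxs, show 2 * n + 1 + 1 = 2 * n + 2 from by ring] at h
      rwa [norm_sub_rev] at h
    have t3 : ‖p - x (2 * n + 1)‖ ≤ ‖p - x (2 * n)‖ + ‖x (2 * n) - x (2 * n + 1)‖ :=
      norm_sub_le_norm_sub_add_norm_sub _ _ _
    have t1 : ‖p - T p‖ ≤ ‖p - x (2 * n + 2)‖ + ‖x (2 * n + 2) - T p‖ :=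
      norm_sub_le_norm_sub_add_norm_sub _ _ _
    rw [norm_sub_rev p (x (2 * n + 2))] at t1
    rw [norm_sub_rev p (x (2 * n))] at t3
    have t4 : α * ‖p - x (2 * n + 1)‖ ≤ α * (d + 2 * ε) :=
      mul_le_mul_of_nonneg_left (by linarith) hα0.le
    linarith [t1, t2, t4, d2, hεkey,
      mul_pos (show (0:ℝ) < 1 - α by linarith) hε]
  refine ⟨p, ⟨hpA, hp, le_antisymm hle hge⟩, ?_⟩
  rintro q ⟨-, hq, -⟩
  exact tendsto_nhds_unique hq hp
end

section
/- Let (A,B) be a nonempty, weakly compact and convex pair in a strictly convex Banach space X and suppose (A,B) has proximal normal structure. Then every noncyclic relatively nonexpansive mapping T : A ∪ B → A ∪ B has a best proximity pair; that is, there exists (p,q) ∈ A × B with Tp = p, Tq = q and ‖p−q‖ = dist(A,B). -/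
open Set Metric

/-- `δ(A,B) = sup {‖x - y‖ : x ∈ A, y ∈ B}`. -/
noncomputable def setDelta {X : Type*} [NormedAddCommGroup X] (A B : Set X) : ℝ :=
  sSup ((fun p : X × X => ‖p.1 - p.2‖) '' (A ×ˢ B))

/-- `δ_x(A) = sup {‖x - y‖ : y ∈ A}`. -/
noncomputable def deltaPt {X : Type*} [NormedAddCommGroup X] (x : X) (A : Set X) : ℝ :=
  sSup ((fun y => ‖x - y‖) '' A)

/-- A convex pair `(K₁, K₂)` has proximal normal structure if for every nonempty, bounded,
closed, convex and proximinal pair `(H₁, H₂) ⊆ (K₁, K₂)` with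
`dist(H₁,H₂) = dist(K₁,K₂)` and `δ(H₁,H₂) > dist(H₁,H₂)`, there is `(x₁,x₂) ∈ H₁ × H₂`
with `max (δ_{x₁}(H₂)) (δ_{x₂}(H₁)) < δ(H₁,H₂)`. -/
def ProximalNormalStructure {X : Type*} [NormedAddCommGroup X] [NormedSpace ℝ X]
    (K₁ K₂ : Set X) : Prop :=
  ∀ H₁ H₂ : Set X, H₁ ⊆ K₁ → H₂ ⊆ K₂ → H₁.Nonempty → H₂.Nonempty →
    Bornology.IsBounded H₁ → Bornology.IsBounded H₂ → IsClosed H₁ → IsClosed H₂ →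
    Convex ℝ H₁ → Convex ℝ H₂ →
    (∀ x ∈ H₁, ∃ y ∈ H₂, ‖x - y‖ = setDist H₁ H₂) →
    (∀ y ∈ H₂, ∃ x ∈ H₁, ‖x - y‖ = setDist H₁ H₂) →
    setDist H₁ H₂ = setDist K₁ K₂ →
    setDist H₁ H₂ < setDelta H₁ H₂ →
    ∃ x₁ ∈ H₁, ∃ x₂ ∈ H₂, max (deltaPt x₁ H₂) (deltaPt x₂ H₁) < setDelta H₁ H₂

set_option linter.unusedSectionVars false

section Aux

variable {X : Type*} [NormedAddCommGroup X] [NormedSpace ℝ X]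

/-- closed convex sets are weakly closed -/
lemma aux_weaklyClosed {S : Set X} (hcv : Convex ℝ S) (hcl : IsClosed S) :
    IsClosed (toWeakSpace ℝ X '' S) := by
  have h := hcv.toWeakSpace_closure (𝕜 := ℝ)
  rw [hcl.closure_eq] at h
  rw [h]; exact isClosed_closure

lemma aux_wcompact {S C : Set X} (hC : IsCompact (toWeakSpace ℝ X '' C))
    (hsub : S ⊆ C) (hcv : Convex ℝ S) (hcl : IsClosed S) :
    IsCompact (toWeakSpace ℝ X '' S) :=
  hC.of_isClosed_subset (aux_weaklyClosed hcv hcl) (Set.image_mono hsub)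

lemma aux_iInter_nonempty {ι : Type*} [Nonempty ι] (t : ι → Set X) {C : Set X}
    (hC : IsCompact (toWeakSpace ℝ X '' C)) (hsub : ∀ i, t i ⊆ C)
    (hne : ∀ i, (t i).Nonempty) (hcl : ∀ i, IsClosed (t i)) (hcv : ∀ i, Convex ℝ (t i))
    (hdir : Directed (· ⊇ ·) t) : (⋂ i, t i).Nonempty := by
  have himg : (⋂ i, toWeakSpace ℝ X '' t i).Nonempty := by
    refine IsCompact.nonempty_iInter_of_directed_nonempty_isCompact_isClosed _
      (fun i j => ?_) (fun i => (hne i).image _)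
      (fun i => aux_wcompact hC (hsub i) (hcv i) (hcl i))
      (fun i => aux_weaklyClosed (hcv i) (hcl i))
    obtain ⟨k, hk1, hk2⟩ := hdir i j
    exact ⟨k, Set.image_mono hk1, Set.image_mono hk2⟩
  rw [← Set.image_iInter (toWeakSpace ℝ X).bijective] at himg
  obtain ⟨_, x, hx, rfl⟩ := himg
  exact ⟨x, hx⟩

/-- attainment of infDist on a weakly compact convex set -/
lemma aux_attain {F : Set X} (hFne : F.Nonempty) (hFcl : IsClosed F) (hFcv : Convex ℝ F)
    (hFwc : IsCompact (toWeakSpace ℝ X '' F)) (x : X) :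
    ∃ y ∈ F, dist x y = infDist x F := by
  set c := infDist x F with hc
  have hnet : ∀ n : ℕ, ∃ y ∈ F, dist x y ≤ c + 1 / (n + 1) := by
    intro n
    have hlt : c < c + 1 / (n + 1) := by
      have : (0:ℝ) < 1 / (n+1) := by positivity
      linarith
    obtain ⟨y, hy, hdy⟩ := (infDist_lt_iff hFne).mp hlt
    exact ⟨y, hy, hdy.le⟩
  set t : ℕ → Set X := fun n => F ∩ closedBall x (c + 1 / (n + 1)) with ht
  have hmono : ∀ m n : ℕ, m ≤ n → t n ⊆ t m := by
    intro m n hmn y hy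
    refine ⟨hy.1, ?_⟩
    have h2 : dist y x ≤ c + 1/(n+1) := hy.2
    have hcast : (m:ℝ) ≤ n := Nat.cast_le.mpr hmn
    have : (1:ℝ) / (n+1) ≤ 1 / (m+1) :=
      one_div_le_one_div_of_le (by positivity) (by linarith)
    have : dist y x ≤ c + 1/(m+1) := by linarith
    exact this
  have hint : (⋂ n, t n).Nonempty := by
    refine aux_iInter_nonempty t hFwc (fun n => Set.inter_subset_left) (fun n => ?_)
      (fun n => hFcl.inter isClosed_closedBall) (fun n => hFcv.inter (convex_closedBall _ _))
      (fun m n => ⟨max m n, hmono _ _ (le_max_left m n), hmono _ _ (le_max_right m n)⟩)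
    obtain ⟨y, hy, hdy⟩ := hnet n
    exact ⟨y, hy, by simpa [mem_closedBall, dist_comm] using hdy⟩
  obtain ⟨y, hy⟩ := hint
  simp only [Set.mem_iInter] at hy
  have hyF : y ∈ F := (hy 0).1
  refine ⟨y, hyF, le_antisymm ?_ (infDist_le_dist_of_mem hyF)⟩
  refine le_of_forall_pos_le_add fun ε hε => ?_
  obtain ⟨n, hn⟩ := exists_nat_one_div_lt hε
  have := (hy n).2
  rw [mem_closedBall, dist_comm] at this
  linarith

/-- partner below a threshold -/
lemma aux_partner {F : Set X} (hFne : F.Nonempty) (hFcl : IsClosed F) (hFcv : Convex ℝ F)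
    (hFwc : IsCompact (toWeakSpace ℝ X '' F)) {x : X} {c : ℝ} (h : infDist x F ≤ c) :
    ∃ y ∈ F, ‖x - y‖ ≤ c := by
  obtain ⟨y, hy, hdy⟩ := aux_attain hFne hFcl hFcv hFwc x
  exact ⟨y, hy, by rw [← dist_eq_norm]; exact hdy.trans_le h⟩

lemma aux_combo {x y x' y' : X} {a b c : ℝ} (ha : 0 ≤ a) (hb : 0 ≤ b) (hab : a + b = 1)
    (h1 : ‖x - y‖ ≤ c) (h2 : ‖x' - y'‖ ≤ c) :
    ‖(a • x + b • x') - (a • y + b • y')‖ ≤ c := by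
  have heq : (a • x + b • x') - (a • y + b • y') = a • (x - y) + b • (x' - y') := by module
  rw [heq]
  calc ‖a • (x - y) + b • (x' - y')‖ ≤ ‖a • (x - y)‖ + ‖b • (x' - y')‖ := norm_add_le _ _
    _ = a * ‖x - y‖ + b * ‖x' - y'‖ := by
        rw [norm_smul, norm_smul, Real.norm_of_nonneg ha, Real.norm_of_nonneg hb]
    _ ≤ a * c + b * c := by
        have h0c : (0:ℝ) ≤ c := le_trans (norm_nonneg _) h1
        exact add_le_add (mul_le_mul_of_nonneg_left h1 ha) (mul_le_mul_of_nonneg_left h2 hb)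
    _ = c := by rw [← add_mul, hab, one_mul]

/-- The proximal refinement set `{x ∈ E | ∃ y ∈ F, ‖x - y‖ = d}` is closed and convex. -/
lemma aux_Pset {E F : Set X} (hEcl : IsClosed E) (hEcv : Convex ℝ E)
    (hFne : F.Nonempty) (hFcl : IsClosed F) (hFcv : Convex ℝ F)
    (hFwc : IsCompact (toWeakSpace ℝ X '' F)) {d : ℝ}
    (hlb : ∀ x ∈ E, ∀ y ∈ F, d ≤ ‖x - y‖) :
    IsClosed {x ∈ E | ∃ y ∈ F, ‖x - y‖ = d} ∧ Convex ℝ {x ∈ E | ∃ y ∈ F, ‖x - y‖ = d} := by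
  constructor
  · have heq : {x ∈ E | ∃ y ∈ F, ‖x - y‖ = d} = E ∩ (fun x => infDist x F) ⁻¹' Iic d := by
      ext x
      simp only [Set.mem_setOf_eq, Set.mem_inter_iff, Set.mem_preimage, Set.mem_Iic]
      constructor
      · rintro ⟨hxE, y, hyF, hxy⟩
        exact ⟨hxE, hxy ▸ (by rw [← dist_eq_norm] at hxy ⊢; exact infDist_le_dist_of_mem hyF)⟩
      · rintro ⟨hxE, hinf⟩
        obtain ⟨y, hyF, hxy⟩ := aux_partner hFne hFcl hFcv hFwc hinf
        exact ⟨hxE, y, hyF, le_antisymm hxy (hlb x hxE y hyF)⟩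
    rw [heq]
    exact hEcl.inter (IsClosed.preimage (continuous_infDist_pt F) isClosed_Iic)
  · rintro x ⟨hxE, y, hyF, hxy⟩ x' ⟨hx'E, y', hy'F, hxy'⟩ a b ha hb hab
    refine ⟨hEcv hxE hx'E ha hb hab, a • y + b • y', hFcv hyF hy'F ha hb hab, ?_⟩
    exact le_antisymm (aux_combo ha hb hab hxy.le hxy'.le)
      (hlb _ (hEcv hxE hx'E ha hb hab) _ (hFcv hyF hy'F ha hb hab))

/-- weakly compact sets are norm bounded (uniform boundedness) -/
lemma aux_bounded {S : Set X} (hS : IsCompact (toWeakSpace ℝ X '' S)) :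
    Bornology.IsBounded S := by
  rcases S.eq_empty_or_nonempty with rfl | hne
  · exact Bornology.isBounded_empty
  rw [isBounded_iff_forall_norm_le]
  have key : ∃ C, ∀ i : S, ‖(NormedSpace.inclusionInDoubleDual ℝ X) (i : X)‖ ≤ C := by
    apply banach_steinhaus (g := fun i : S => (NormedSpace.inclusionInDoubleDual ℝ X) (i : X))
    intro f
    let f' : WeakSpace ℝ X →L[ℝ] ℝ :=
      { toLinearMap := (f : X →ₗ[ℝ] ℝ).comp ((toWeakSpace ℝ X).symm : WeakSpace ℝ X →ₗ[ℝ] X)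
        cont := WeakBilin.eval_continuous (topDualPairing ℝ X).flip _ }
    have hcomp : IsCompact (f' '' (toWeakSpace ℝ X '' S)) := hS.image f'.continuous
    obtain ⟨C, hC⟩ := isBounded_iff_forall_norm_le.mp hcomp.isBounded
    refine ⟨C, fun i => ?_⟩
    have : f' (toWeakSpace ℝ X (i : X)) = f (i : X) := by
      exact congrArg f ((toWeakSpace ℝ X).symm_apply_apply (i : X))
    have hmem : f (i : X) ∈ f' '' (toWeakSpace ℝ X '' S) :=
      ⟨toWeakSpace ℝ X (i : X), ⟨(i : X), i.2, rfl⟩, this⟩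
    simpa [NormedSpace.dual_def] using hC _ hmem
  obtain ⟨C, hC⟩ := key
  refine ⟨C, fun x hx => ?_⟩
  have := hC ⟨x, hx⟩
  rwa [show (NormedSpace.inclusionInDoubleDual ℝ X) x =
    (NormedSpace.inclusionInDoubleDualLi ℝ (E := X)) x from rfl,
    (NormedSpace.inclusionInDoubleDualLi ℝ (E := X)).norm_map x] at this

lemma aux_t2 : T2Space (WeakSpace ℝ X) := by
  apply (WeakBilin.isEmbedding (B := (topDualPairing ℝ X).flip) ?_).t2Space
  intro x y hxy
  by_contra hne
  have hne' : x ≠ y := fun h => hne (by rw [h])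
  obtain ⟨f, hf⟩ := SeparatingDual.exists_separating_of_ne (R := ℝ) hne'
  have := congrFun (congrArg DFunLike.coe hxy) f
  simp [topDualPairing] at this
  exact hf (by simpa using this)

/-- weakly compact sets are norm-closed -/
lemma aux_closed_of_wc {S : Set X} (hS : IsCompact (toWeakSpace ℝ X '' S)) : IsClosed S := by
  have : T2Space (WeakSpace ℝ X) := aux_t2
  have hcl : IsClosed (toWeakSpace ℝ X '' S) := hS.isClosed
  have hSeq : S = (toWeakSpaceCLM ℝ X) ⁻¹' (toWeakSpace ℝ X '' S) := by
    ext x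
    simp only [Set.mem_preimage]
    constructor
    · intro hx; exact ⟨x, hx, rfl⟩
    · rintro ⟨y, hy, hxy⟩
      have : y = x := (toWeakSpace ℝ X).injective
        (by rwa [← toWeakSpaceCLM_eq_toWeakSpace (𝕜 := ℝ) (E := X) x])
      rwa [← this]
  rw [hSeq]
  exact hcl.preimage (toWeakSpaceCLM ℝ X).continuous

lemma setDist_le {A B : Set X} {x y : X} (hx : x ∈ A) (hy : y ∈ B) :
    setDist A B ≤ ‖x - y‖ := by
  apply csInf_le
  · exact ⟨0, by rintro _ ⟨p, hp, rfl⟩; positivity⟩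
  · exact ⟨(x, y), ⟨hx, hy⟩, rfl⟩

lemma setDist_eq_of {A B : Set X} {d : ℝ} (hlb : ∀ x ∈ A, ∀ y ∈ B, d ≤ ‖x - y‖)
    {x y : X} (hx : x ∈ A) (hy : y ∈ B) (hxy : ‖x - y‖ = d) : setDist A B = d := by
  refine le_antisymm (hxy ▸ setDist_le hx hy) (le_csInf ⟨‖x - y‖, ⟨(x,y), ⟨hx,hy⟩, rfl⟩⟩ ?_)
  rintro _ ⟨p, hp, rfl⟩
  exact hlb p.1 hp.1 p.2 hp.2

lemma bddAbove_pairs {A B : Set X} (hA : Bornology.IsBounded A) (hB : Bornology.IsBounded B) :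
    BddAbove ((fun p : X × X => ‖p.1 - p.2‖) '' (A ×ˢ B)) := by
  obtain ⟨C₁, hC₁⟩ := isBounded_iff_forall_norm_le.mp hA
  obtain ⟨C₂, hC₂⟩ := isBounded_iff_forall_norm_le.mp hB
  refine ⟨C₁ + C₂, ?_⟩
  rintro _ ⟨p, hp, rfl⟩
  calc ‖p.1 - p.2‖ ≤ ‖p.1‖ + ‖p.2‖ := norm_sub_le _ _
    _ ≤ C₁ + C₂ := add_le_add (hC₁ _ hp.1) (hC₂ _ hp.2)

lemma le_setDelta {A B : Set X} (hA : Bornology.IsBounded A) (hB : Bornology.IsBounded B)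
    {x y : X} (hx : x ∈ A) (hy : y ∈ B) : ‖x - y‖ ≤ setDelta A B :=
  le_csSup (bddAbove_pairs hA hB) ⟨(x, y), ⟨hx, hy⟩, rfl⟩

lemma setDelta_le {A B : Set X} (hA : A.Nonempty) (hB : B.Nonempty) {c : ℝ}
    (h : ∀ x ∈ A, ∀ y ∈ B, ‖x - y‖ ≤ c) : setDelta A B ≤ c := by
  refine csSup_le ?_ ?_
  · obtain ⟨x, hx⟩ := hA; obtain ⟨y, hy⟩ := hB
    exact ⟨‖x - y‖, ⟨(x,y), ⟨hx,hy⟩, rfl⟩⟩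
  · rintro _ ⟨p, hp, rfl⟩; exact h p.1 hp.1 p.2 hp.2

lemma le_deltaPt {x : X} {A : Set X} (hA : Bornology.IsBounded A) {y : X} (hy : y ∈ A) :
    ‖x - y‖ ≤ deltaPt x A := by
  obtain ⟨C, hC⟩ := isBounded_iff_forall_norm_le.mp hA
  refine le_csSup ⟨‖x‖ + C, ?_⟩ ⟨y, hy, rfl⟩
  rintro _ ⟨z, hz, rfl⟩
  calc ‖x - z‖ ≤ ‖x‖ + ‖z‖ := norm_sub_le _ _
    _ ≤ ‖x‖ + C := by linarith [hC z hz]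

end Aux

/-- Eldred–Kirk–Veeramani: in a strictly convex Banach space, a noncyclic relatively
nonexpansive mapping on a nonempty, weakly compact, convex pair with proximal normal
structure has a best proximity pair. -/
theorem noncyclic_relNonexpansive_best_proximity_pair
    {X : Type*} [NormedAddCommGroup X] [NormedSpace ℝ X] [CompleteSpace X]
    [StrictConvexSpace ℝ X]
    (A B : Set X) (hA : A.Nonempty) (hB : B.Nonempty)
    (hAconv : Convex ℝ A) (hBconv : Convex ℝ B)
    (hAwc : IsCompact (toWeakSpace ℝ X '' A)) (hBwc : IsCompact (toWeakSpace ℝ X '' B))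
    (hPNS : ProximalNormalStructure A B)
    (T : X → X) (hTA : Set.MapsTo T A A) (hTB : Set.MapsTo T B B)
    (hT : ∀ x ∈ A, ∀ y ∈ B, ‖T x - T y‖ ≤ ‖x - y‖) :
    ∃ p ∈ A, ∃ q ∈ B, T p = p ∧ T q = q ∧ ‖p - q‖ = setDist A B := by
  classical
  set d := setDist A B with hddef
  have hAbd : Bornology.IsBounded A := aux_bounded hAwc
  have hBbd : Bornology.IsBounded B := aux_bounded hBwc
  have hAcl : IsClosed A := aux_closed_of_wc hAwc
  have hBcl : IsClosed B := aux_closed_of_wc hBwc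
  have hlbAB : ∀ x ∈ A, ∀ y ∈ B, d ≤ ‖x - y‖ := fun x hx y hy => setDist_le hx hy
  -- the Zorn family of pairs
  set S : Set ((Set X × Set X)ᵒᵈ) := {p | (OrderDual.ofDual p).1 ⊆ A ∧
    (OrderDual.ofDual p).2 ⊆ B ∧ (OrderDual.ofDual p).1.Nonempty ∧
    (OrderDual.ofDual p).2.Nonempty ∧ Convex ℝ (OrderDual.ofDual p).1 ∧
    Convex ℝ (OrderDual.ofDual p).2 ∧ IsClosed (OrderDual.ofDual p).1 ∧
    IsClosed (OrderDual.ofDual p).2 ∧ Set.MapsTo T (OrderDual.ofDual p).1 (OrderDual.ofDual p).1 ∧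
    Set.MapsTo T (OrderDual.ofDual p).2 (OrderDual.ofDual p).2 ∧
    ∃ x ∈ (OrderDual.ofDual p).1, ∃ y ∈ (OrderDual.ofDual p).2, ‖x - y‖ = d} with hSdef
  -- distance is attained on (A, B)
  have hQAB : ∃ x ∈ A, ∃ y ∈ B, ‖x - y‖ = d := by
    set t : ℕ → Set X := fun n => {x ∈ A | infDist x B ≤ d + 1 / (n + 1)} with htdef
    have htsub : ∀ n, t n ⊆ A := fun n => sep_subset _ _
    have htne : ∀ n, (t n).Nonempty := by
      intro n
      have himne : ((fun p : X × X => ‖p.1 - p.2‖) '' (A ×ˢ B)).Nonempty := by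
        obtain ⟨x, hx⟩ := hA; obtain ⟨y, hy⟩ := hB
        exact ⟨‖x - y‖, ⟨(x, y), ⟨hx, hy⟩, rfl⟩⟩
      have hlt : sInf ((fun p : X × X => ‖p.1 - p.2‖) '' (A ×ˢ B)) < d + 1 / (n + 1) := by
        have : (0:ℝ) < 1 / (n+1) := by positivity
        rw [hddef]; unfold setDist; linarith
      obtain ⟨_, ⟨p, hp, rfl⟩, hv⟩ := exists_lt_of_csInf_lt himne hlt
      refine ⟨p.1, hp.1, ?_⟩
      have : infDist p.1 B ≤ dist p.1 p.2 := infDist_le_dist_of_mem hp.2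
      rw [dist_eq_norm] at this
      linarith
    have htcl : ∀ n, IsClosed (t n) := fun n =>
      hAcl.inter (IsClosed.preimage (continuous_infDist_pt B) isClosed_Iic)
    have htcv : ∀ n, Convex ℝ (t n) := by
      intro n
      rintro x ⟨hxA, hx⟩ x' ⟨hx'A, hx'⟩ a b ha hb hab
      refine ⟨hAconv hxA hx'A ha hb hab, ?_⟩
      obtain ⟨y, hy, hxy⟩ := aux_partner hB hBcl hBconv hBwc hx
      obtain ⟨y', hy', hxy'⟩ := aux_partner hB hBcl hBconv hBwc hx'
      have := aux_combo (x := x) (y := y) (x' := x') (y' := y') ha hb hab hxy hxy'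
      calc infDist (a • x + b • x') B ≤ dist (a • x + b • x') (a • y + b • y') :=
            infDist_le_dist_of_mem (hBconv hy hy' ha hb hab)
        _ ≤ d + 1 / (n + 1) := by rw [dist_eq_norm]; exact this
    have hmono : ∀ m n : ℕ, m ≤ n → t n ⊆ t m := by
      intro m n hmn x hx
      refine ⟨hx.1, hx.2.trans ?_⟩
      have hcast : (m:ℝ) ≤ n := Nat.cast_le.mpr hmn
      have : (1:ℝ) / (n+1) ≤ 1 / (m+1) := one_div_le_one_div_of_le (by positivity) (by linarith)
      linarith
    obtain ⟨x, hx⟩ := aux_iInter_nonempty t hAwc htsub htne htcl htcv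
      (fun m n => ⟨max m n, hmono _ _ (le_max_left m n), hmono _ _ (le_max_right m n)⟩)
    simp only [Set.mem_iInter] at hx
    have hxA : x ∈ A := (hx 0).1
    have hinf : infDist x B ≤ d := by
      refine le_of_forall_pos_le_add fun ε hε => ?_
      obtain ⟨n, hn⟩ := exists_nat_one_div_lt hε
      have := (hx n).2
      linarith
    obtain ⟨y, hyB, hxy⟩ := aux_partner hB hBcl hBconv hBwc hinf
    exact ⟨x, hxA, y, hyB, le_antisymm hxy (hlbAB x hxA y hyB)⟩
  have hABS : OrderDual.toDual (A, B) ∈ S :=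
    ⟨subset_rfl, subset_rfl, hA, hB, hAconv, hBconv, hAcl, hBcl, hTA, hTB, hQAB⟩
  -- Zorn's lemma: a minimal invariant pair
  have hchain : ∀ c ⊆ S, IsChain (· ≤ ·) c → ∀ y ∈ c, ∃ ub ∈ S, ∀ z ∈ c, z ≤ ub := by
    intro c hcS hch y₀ hy₀c
    haveI : Nonempty c := ⟨⟨y₀, hy₀c⟩⟩
    set f1 : c → Set X := fun p => (OrderDual.ofDual (p : (Set X × Set X)ᵒᵈ)).1 with hf1
    set f2 : c → Set X := fun p => (OrderDual.ofDual (p : (Set X × Set X)ᵒᵈ)).2 with hf2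
    have h1A : ∀ p : c, f1 p ⊆ A := fun p => (hcS p.2).1
    have h2B : ∀ p : c, f2 p ⊆ B := fun p => (hcS p.2).2.1
    have h1ne : ∀ p : c, (f1 p).Nonempty := fun p => (hcS p.2).2.2.1
    have h2ne : ∀ p : c, (f2 p).Nonempty := fun p => (hcS p.2).2.2.2.1
    have h1cv : ∀ p : c, Convex ℝ (f1 p) := fun p => (hcS p.2).2.2.2.2.1
    have h2cv : ∀ p : c, Convex ℝ (f2 p) := fun p => (hcS p.2).2.2.2.2.2.1
    have h1cl : ∀ p : c, IsClosed (f1 p) := fun p => (hcS p.2).2.2.2.2.2.2.1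
    have h2cl : ∀ p : c, IsClosed (f2 p) := fun p => (hcS p.2).2.2.2.2.2.2.2.1
    have h1T : ∀ p : c, Set.MapsTo T (f1 p) (f1 p) := fun p => (hcS p.2).2.2.2.2.2.2.2.2.1
    have h2T : ∀ p : c, Set.MapsTo T (f2 p) (f2 p) := fun p => (hcS p.2).2.2.2.2.2.2.2.2.2.1
    have hQ : ∀ p : c, ∃ x ∈ f1 p, ∃ y ∈ f2 p, ‖x - y‖ = d :=
      fun p => (hcS p.2).2.2.2.2.2.2.2.2.2.2
    have wc2 : ∀ p : c, IsCompact (toWeakSpace ℝ X '' f2 p) :=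
      fun p => aux_wcompact hBwc (h2B p) (h2cv p) (h2cl p)
    have hdir : ∀ p q : c, ∃ k : c, f1 k ⊆ f1 p ∧ f2 k ⊆ f2 p ∧ f1 k ⊆ f1 q ∧ f2 k ⊆ f2 q := by
      intro p q
      rcases eq_or_ne (p : (Set X × Set X)ᵒᵈ) (q : (Set X × Set X)ᵒᵈ) with h | h
      · refine ⟨p, subset_rfl, subset_rfl, ?_, ?_⟩ <;> simp [f1, f2, h]
      · rcases hch p.2 q.2 h with hle | hle
        · exact ⟨q, hle.1, hle.2, subset_rfl, subset_rfl⟩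
        · exact ⟨p, subset_rfl, subset_rfl, hle.1, hle.2⟩
    set E : Set X := ⋂ p : c, f1 p with hE
    set F : Set X := ⋂ p : c, f2 p with hF
    have hEsubA : E ⊆ A := (Set.iInter_subset _ ⟨y₀, hy₀c⟩).trans (h1A _)
    have hFsubB : F ⊆ B := (Set.iInter_subset _ ⟨y₀, hy₀c⟩).trans (h2B _)
    -- stage 1 : a point of E at infDist ≤ d from every f2 p
    set G : c → Set X := fun p => {x ∈ f1 p | infDist x (f2 p) ≤ d} with hG
    have hGne : ∀ p, (G p).Nonempty := by
      intro p; obtain ⟨x, hx, y, hy, hxy⟩ := hQ p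
      exact ⟨x, hx, by rw [← hxy, ← dist_eq_norm]; exact infDist_le_dist_of_mem hy⟩
    have hGcl : ∀ p, IsClosed (G p) := fun p =>
      (h1cl p).inter (IsClosed.preimage (continuous_infDist_pt _) isClosed_Iic)
    have hGcv : ∀ p, Convex ℝ (G p) := by
      intro p
      rintro x ⟨hx1, hx2⟩ x' ⟨hx'1, hx'2⟩ a b ha hb hab
      refine ⟨h1cv p hx1 hx'1 ha hb hab, ?_⟩
      obtain ⟨z, hz, hxz⟩ := aux_partner (h2ne p) (h2cl p) (h2cv p) (wc2 p) hx2
      obtain ⟨z', hz', hxz'⟩ := aux_partner (h2ne p) (h2cl p) (h2cv p) (wc2 p) hx'2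
      calc infDist (a•x + b•x') (f2 p) ≤ dist (a•x+b•x') (a•z+b•z') :=
            infDist_le_dist_of_mem (h2cv p hz hz' ha hb hab)
        _ ≤ d := by rw [dist_eq_norm]; exact aux_combo ha hb hab hxz hxz'
    have hGsubA : ∀ p, G p ⊆ A := fun p => (sep_subset _ _).trans (h1A p)
    have hGdir : Directed (· ⊇ ·) G := by
      intro p q
      obtain ⟨k, hk1, hk2, hk3, hk4⟩ := hdir p q
      refine ⟨k, ?_, ?_⟩
      · rintro x ⟨hx1, hx2⟩
        exact ⟨hk1 hx1, (infDist_le_infDist_of_subset hk2 (h2ne k)).trans hx2⟩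
      · rintro x ⟨hx1, hx2⟩
        exact ⟨hk3 hx1, (infDist_le_infDist_of_subset hk4 (h2ne k)).trans hx2⟩
    obtain ⟨xi, hxi⟩ := aux_iInter_nonempty G hAwc hGsubA hGne hGcl hGcv hGdir
    simp only [Set.mem_iInter] at hxi
    have hxiE : xi ∈ E := Set.mem_iInter.mpr fun p => (hxi p).1
    -- stage 2 : a partner of xi in F
    set H : c → Set X := fun p => {y ∈ f2 p | ‖xi - y‖ ≤ d} with hH
    have hHne : ∀ p, (H p).Nonempty := by
      intro p
      obtain ⟨z, hz, hxz⟩ := aux_partner (h2ne p) (h2cl p) (h2cv p) (wc2 p) (hxi p).2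
      exact ⟨z, hz, hxz⟩
    have hHcl : ∀ p, IsClosed (H p) := fun p =>
      (h2cl p).inter (isClosed_le (Continuous.norm (by fun_prop)) continuous_const)
    have hHcv : ∀ p, Convex ℝ (H p) := by
      intro p
      rintro z ⟨hz1, hz2⟩ z' ⟨hz'1, hz'2⟩ a b ha hb hab
      refine ⟨h2cv p hz1 hz'1 ha hb hab, ?_⟩
      have hx := aux_combo (x := xi) (x' := xi) ha hb hab hz2 hz'2
      rwa [show a•xi+b•xi = xi from by rw [← add_smul, hab, one_smul]] at hx
    have hHsubB : ∀ p, H p ⊆ B := fun p => (sep_subset _ _).trans (h2B p)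
    have hHdir : Directed (· ⊇ ·) H := by
      intro p q
      obtain ⟨k, hk1, hk2, hk3, hk4⟩ := hdir p q
      exact ⟨k, fun x hx => ⟨hk2 hx.1, hx.2⟩, fun x hx => ⟨hk4 hx.1, hx.2⟩⟩
    obtain ⟨yi, hyi⟩ := aux_iInter_nonempty H hBwc hHsubB hHne hHcl hHcv hHdir
    simp only [Set.mem_iInter] at hyi
    have hyiF : yi ∈ F := Set.mem_iInter.mpr fun p => (hyi p).1
    have hxiyi : ‖xi - yi‖ = d :=
      le_antisymm (hyi ⟨y₀, hy₀c⟩).2 (hlbAB xi (hEsubA hxiE) yi (hFsubB hyiF))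
    refine ⟨OrderDual.toDual (E, F), ⟨hEsubA, hFsubB, ⟨xi, hxiE⟩, ⟨yi, hyiF⟩,
      convex_iInter fun p => h1cv p, convex_iInter fun p => h2cv p,
      isClosed_iInter fun p => h1cl p, isClosed_iInter fun p => h2cl p,
      fun x hx => Set.mem_iInter.mpr fun p => h1T p (Set.mem_iInter.mp hx p),
      fun x hx => Set.mem_iInter.mpr fun p => h2T p (Set.mem_iInter.mp hx p),
      xi, hxiE, yi, hyiF, hxiyi⟩, ?_⟩
    intro z hz
    exact ⟨Set.iInter_subset (fun p : c => f1 p) ⟨z, hz⟩,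
      Set.iInter_subset (fun p : c => f2 p) ⟨z, hz⟩⟩
  obtain ⟨m, hABm, hmS, hmax⟩ := zorn_le_nonempty₀ S hchain (OrderDual.toDual (A, B)) hABS
  set K1 : Set X := (OrderDual.ofDual m).1 with hK1def
  set K2 : Set X := (OrderDual.ofDual m).2 with hK2def
  obtain ⟨hK1A, hK2B, hK1ne, hK2ne, hK1cv, hK2cv, hK1cl, hK2cl, hTK1, hTK2, hQK⟩ := hmS
  have hmin : ∀ E F : Set X, OrderDual.toDual (E, F) ∈ S → E ⊆ K1 → F ⊆ K2 →
      E = K1 ∧ F = K2 := by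
    intro E F hEF h1 h2
    have hle : m ≤ OrderDual.toDual (E, F) := ⟨h1, h2⟩
    have hge := hmax hEF hle
    exact ⟨le_antisymm h1 hge.1, le_antisymm h2 hge.2⟩
  have hK1bd := hAbd.subset hK1A
  have hK2bd := hBbd.subset hK2B
  have wcK1 : IsCompact (toWeakSpace ℝ X '' K1) := aux_wcompact hAwc hK1A hK1cv hK1cl
  have wcK2 : IsCompact (toWeakSpace ℝ X '' K2) := aux_wcompact hBwc hK2B hK2cv hK2cl
  have hlbK : ∀ x ∈ K1, ∀ y ∈ K2, d ≤ ‖x - y‖ := fun x hx y hy => hlbAB x (hK1A hx) y (hK2B hy)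
  have hlbK' : ∀ y ∈ K2, ∀ x ∈ K1, d ≤ ‖y - x‖ := fun y hy x hx => by
    rw [norm_sub_rev]; exact hlbK x hx y hy
  obtain ⟨x₀, hx₀, y₀, hy₀, hxy₀⟩ := hQK
  have hdistK : setDist K1 K2 = d := setDist_eq_of hlbK hx₀ hy₀ hxy₀
  -- Step A : the minimal pair is proximinal at level d
  obtain ⟨hprox1, hprox2⟩ : (∀ x ∈ K1, ∃ y ∈ K2, ‖x - y‖ = d) ∧
      (∀ y ∈ K2, ∃ x ∈ K1, ‖x - y‖ = d) := by
    set P1 := {x ∈ K1 | ∃ y ∈ K2, ‖x - y‖ = d} with hP1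
    set P2 := {y ∈ K2 | ∃ x ∈ K1, ‖y - x‖ = d} with hP2
    have hP1prop := aux_Pset hK1cl hK1cv hK2ne hK2cl hK2cv wcK2 hlbK
    have hP2prop := aux_Pset hK2cl hK2cv hK1ne hK1cl hK1cv wcK1 hlbK'
    have hmem : OrderDual.toDual (P1, P2) ∈ S := by
      refine ⟨(sep_subset _ _).trans hK1A, (sep_subset _ _).trans hK2B,
        ⟨x₀, hx₀, y₀, hy₀, hxy₀⟩, ⟨y₀, hy₀, x₀, hx₀, by rw [norm_sub_rev]; exact hxy₀⟩,
        hP1prop.2, hP2prop.2, hP1prop.1, hP2prop.1, ?_, ?_,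
        x₀, ⟨hx₀, y₀, hy₀, hxy₀⟩, y₀, ⟨hy₀, x₀, hx₀, by rw [norm_sub_rev]; exact hxy₀⟩, hxy₀⟩
      · rintro x ⟨hx, y, hy, hxy⟩
        exact ⟨hTK1 hx, T y, hTK2 hy,
          le_antisymm (hxy ▸ hT x (hK1A hx) y (hK2B hy)) (hlbK _ (hTK1 hx) _ (hTK2 hy))⟩
      · rintro y ⟨hy, x, hx, hyx⟩
        refine ⟨hTK2 hy, T x, hTK1 hx, ?_⟩
        rw [norm_sub_rev] at hyx ⊢
        exact le_antisymm (hyx ▸ hT x (hK1A hx) y (hK2B hy)) (hlbK _ (hTK1 hx) _ (hTK2 hy))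
    obtain ⟨hP1eq, hP2eq⟩ := hmin P1 P2 hmem (sep_subset _ _) (sep_subset _ _)
    constructor
    · intro x hx
      rw [← hP1eq] at hx
      exact hx.2
    · intro y hy
      rw [← hP2eq] at hy
      obtain ⟨hyK2, x, hxK1, hyx⟩ := hy
      exact ⟨x, hxK1, by rw [norm_sub_rev] at hyx; exact hyx⟩
  -- Step B : K2 is the closed convex hull of T '' K2
  set C2 := closure (convexHull ℝ (T '' K2)) with hC2def
  have hC2subK2 : C2 ⊆ K2 := closure_minimal
    (convexHull_min (fun z hz => by obtain ⟨w, hw, rfl⟩ := hz; exact hTK2 hw) hK2cv) hK2cl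
  have hC2ne : C2.Nonempty := ⟨T y₀, subset_closure (subset_convexHull ℝ _ ⟨y₀, hy₀, rfl⟩)⟩
  have hC2cv : Convex ℝ C2 := (convex_convexHull ℝ _).closure
  have hC2cl : IsClosed C2 := isClosed_closure
  have hC2B : C2 ⊆ B := hC2subK2.trans hK2B
  have wcC2 : IsCompact (toWeakSpace ℝ X '' C2) := aux_wcompact hBwc hC2B hC2cv hC2cl
  have hTC2 : Set.MapsTo T C2 C2 := fun z hz =>
    subset_closure (subset_convexHull ℝ _ ⟨z, hC2subK2 hz, rfl⟩)
  have hlbKC2 : ∀ x ∈ K1, ∀ y ∈ C2, d ≤ ‖x - y‖ := fun x hx y hy => hlbK x hx y (hC2subK2 hy)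
  have hK2hull : C2 = K2 := by
    set K1' := {x ∈ K1 | ∃ y ∈ C2, ‖x - y‖ = d} with hK1'
    have hprop := aux_Pset hK1cl hK1cv hC2ne hC2cl hC2cv wcC2 hlbKC2
    obtain ⟨y1, hy1⟩ := hC2ne
    obtain ⟨x1, hx1, hx1y1⟩ := hprox2 y1 (hC2subK2 hy1)
    have hmem : OrderDual.toDual (K1', C2) ∈ S := by
      refine ⟨(sep_subset _ _).trans hK1A, hC2B, ⟨x1, hx1, y1, hy1, hx1y1⟩, ⟨y1, hy1⟩,
        hprop.2, hC2cv, hprop.1, hC2cl, ?_, hTC2, x1, ⟨hx1, y1, hy1, hx1y1⟩, y1, hy1, hx1y1⟩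
      rintro x ⟨hx, y, hy, hxy⟩
      exact ⟨hTK1 hx, T y, hTC2 hy,
        le_antisymm (hxy ▸ hT x (hK1A hx) y (hC2B hy)) (hlbK _ (hTK1 hx) _ (hTK2 (hC2subK2 hy)))⟩
    exact (hmin K1' C2 hmem (sep_subset _ _) hC2subK2).2
  -- Step C : the diameter of the minimal pair equals d
  have hdelta_le : setDelta K1 K2 ≤ d := by
    by_contra hgt
    push_neg at hgt
    obtain ⟨x₁, hx₁, x₂, hx₂, hmaxlt⟩ := hPNS K1 K2 hK1A hK2B hK1ne hK2ne hK1bd hK2bd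
      hK1cl hK2cl hK1cv hK2cv
      (by intro x hx; rw [hdistK]; exact hprox1 x hx)
      (by intro y hy; rw [hdistK]; exact hprox2 y hy)
      (by rw [hdistK])
      (by rw [hdistK]; exact hgt)
    set r := max (deltaPt x₁ K2) (deltaPt x₂ K1) with hrdef
    have hr1 : ∀ y ∈ K2, ‖x₁ - y‖ ≤ r := fun y hy =>
      (le_deltaPt hK2bd hy).trans (le_max_left _ _)
    set C1 := {x ∈ K1 | ∀ y ∈ K2, ‖x - y‖ ≤ r} with hC1def
    have hx₁C1 : x₁ ∈ C1 := ⟨hx₁, hr1⟩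
    have hC1cl : IsClosed C1 := by
      have heq : C1 = K1 ∩ ⋂ y ∈ K2, {x | ‖x - y‖ ≤ r} := by
        ext x
        simp only [hC1def, Set.mem_setOf_eq, Set.mem_inter_iff, Set.mem_iInter]
      rw [heq]
      exact hK1cl.inter (isClosed_biInter fun y hy =>
        isClosed_le (Continuous.norm (by fun_prop)) continuous_const)
    have hC1cv : Convex ℝ C1 := by
      rintro x ⟨hx1, hx2⟩ x' ⟨hx'1, hx'2⟩ a b ha hb hab
      refine ⟨hK1cv hx1 hx'1 ha hb hab, fun y hy => ?_⟩
      have hcb := aux_combo (y := y) (y' := y) ha hb hab (hx2 y hy) (hx'2 y hy)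
      rwa [show a•y+b•y = y from by rw [← add_smul, hab, one_smul]] at hcb
    have hC1sub : C1 ⊆ K1 := sep_subset _ _
    have hC1A : C1 ⊆ A := hC1sub.trans hK1A
    have hTC1 : Set.MapsTo T C1 C1 := by
      rintro x ⟨hx1, hx2⟩
      refine ⟨hTK1 hx1, fun y hy => ?_⟩
      have hball : {z : X | ‖T x - z‖ ≤ r} = closedBall (T x) r := by
        ext z
        simp only [Set.mem_setOf_eq, Metric.mem_closedBall, dist_eq_norm]
        rw [norm_sub_rev]
      have hsub : K2 ⊆ {z | ‖T x - z‖ ≤ r} := by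
        rw [← hK2hull]
        refine closure_minimal (convexHull_min ?_ ?_) ?_
        · rintro _ ⟨z, hz, rfl⟩
          exact (hT x (hK1A hx1) z (hK2B hz)).trans (hx2 z hz)
        · rw [hball]; exact convex_closedBall _ _
        · rw [hball]; exact isClosed_closedBall
      exact hsub hy
    set E2 := {y ∈ K2 | ∃ x ∈ C1, ‖y - x‖ = d} with hE2def
    have hlbKC1 : ∀ y ∈ K2, ∀ x ∈ C1, d ≤ ‖y - x‖ := fun y hy x hx => hlbK' y hy x (hC1sub hx)
    have wcC1 : IsCompact (toWeakSpace ℝ X '' C1) := aux_wcompact hAwc hC1A hC1cv hC1cl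
    have hC1ne : C1.Nonempty := ⟨x₁, hx₁C1⟩
    have hprop := aux_Pset hK2cl hK2cv hC1ne hC1cl hC1cv wcC1 hlbKC1
    obtain ⟨y₁, hy₁K2, hx₁y₁⟩ := hprox1 x₁ hx₁
    have hy₁E2 : y₁ ∈ E2 := ⟨hy₁K2, x₁, hx₁C1, by rw [norm_sub_rev]; exact hx₁y₁⟩
    have hmem : OrderDual.toDual (C1, E2) ∈ S := by
      refine ⟨hC1A, (sep_subset _ _).trans hK2B, hC1ne, ⟨y₁, hy₁E2⟩, hC1cv, hprop.2,
        hC1cl, hprop.1, hTC1, ?_, x₁, hx₁C1, y₁, hy₁E2, hx₁y₁⟩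
      rintro y ⟨hy, x, hx, hyx⟩
      refine ⟨hTK2 hy, T x, hTC1 hx, ?_⟩
      rw [norm_sub_rev] at hyx ⊢
      exact le_antisymm (hyx ▸ hT x (hC1A hx) y (hK2B hy))
        (hlbK _ (hTK1 (hC1sub hx)) _ (hTK2 hy))
    have hC1eq : C1 = K1 := (hmin C1 E2 hmem hC1sub (sep_subset _ _)).1
    have hsd : setDelta K1 K2 ≤ r := setDelta_le hK1ne hK2ne
      (fun x hx y hy => (hC1eq.ge hx).2 y hy)
    exact absurd (hsd.trans_lt hmaxlt) (lt_irrefl _)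
  -- Endgame : strict convexity forces the minimal pair to be a pair of singletons
  have hall : ∀ x ∈ K1, ∀ y ∈ K2, ‖x - y‖ = d := fun x hx y hy =>
    le_antisymm ((le_setDelta hK1bd hK2bd hx hy).trans hdelta_le) (hlbK x hx y hy)
  obtain ⟨p, hp⟩ := hK1ne
  obtain ⟨q, hq⟩ := hK2ne
  have hK1sing : ∀ x ∈ K1, x = p := by
    intro x hx
    by_contra hne
    have h1 : ‖p - q‖ = d := hall p hp q hq
    have h2 : ‖x - q‖ = d := hall x hx q hq
    have hxq : p - q ≠ x - q := fun h => hne (sub_left_inj.mp h).symm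
    have hlt := (norm_midpoint_lt_iff (x := p - q) (y := x - q) (by rw [h1, h2])).mpr hxq
    have hmem : (1/2:ℝ) • p + (1/2:ℝ) • x ∈ K1 :=
      hK1cv hp hx (by norm_num) (by norm_num) (by norm_num)
    have hge := hlbK _ hmem q hq
    rw [show (1/2:ℝ)•p + (1/2:ℝ)•x - q = (1/2:ℝ)•((p - q) + (x - q)) from by module] at hge
    rw [h1] at hlt
    linarith
  have hK2sing : ∀ y ∈ K2, y = q := by
    intro y hy
    by_contra hne
    have h1 : ‖p - q‖ = d := hall p hp q hq
    have h2 : ‖p - y‖ = d := hall p hp y hy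
    have hxq : p - q ≠ p - y := fun h => hne (sub_right_inj.mp h).symm
    have hlt := (norm_midpoint_lt_iff (x := p - q) (y := p - y) (by rw [h1, h2])).mpr hxq
    have hmem : (1/2:ℝ) • q + (1/2:ℝ) • y ∈ K2 :=
      hK2cv hq hy (by norm_num) (by norm_num) (by norm_num)
    have hge := hlbK p hp _ hmem
    rw [show p - ((1/2:ℝ)•q + (1/2:ℝ)•y) = (1/2:ℝ)•((p - q) + (p - y)) from by module] at hge
    rw [h1] at hlt
    linarith
  have hTp : T p = p := hK1sing _ (hTK1 hp)
  have hTq : T q = q := hK2sing _ (hTK2 hq)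
  exact ⟨p, hK1A hp, q, hK2B hq, hTp, hTq, hall p hp q hq⟩
end
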